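/- (Arden's lemma for trees, uniqueness part.) Let A and B be two tree languages over a graded alphabet Σ and let c be a symbol in Σ_0 such that the single-node tree c does not belong to A. Then A^{*_c} ·_c B is the unique tree language L over Σ satisfying L = A ·_c L ∪ B. -/

import Mathlib

attribute [local instance] Classical.propDecidable

/-- Trees over a graded alphabet: symbols `α` with arity function `ar`. -/
inductive GTree (α : Type) (ar : α → ℕ) : Type
  | node (f : α) (children : Fin (ar f) → GTree α ar) : GTree α ar

namespace GTree

variable {α : Type} {ar : α → ℕ}

/-- The `c`-product of a tree with a tree language. -/
def cprod (c : α) : GTree α ar → Set (GTree α ar) → Set (GTree α ar)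
  | node f ch, L =>
    if f = c then L
    else { s | ∃ ch' : Fin (ar f) → GTree α ar,
            s = node f ch' ∧ ∀ i, ch' i ∈ cprod c (ch i) L }

/-- The `c`-product of two tree languages. -/
def lprod (c : α) (L L' : Set (GTree α ar)) : Set (GTree α ar) :=
  ⋃ t ∈ L, cprod c t L'

/-- The single-node tree `c`, for `c` of rank 0. -/
def leaf (c : α) (hc : ar c = 0) : GTree α ar :=
  node c (fun i => (i.cast hc).elim0)

/-- The iterated `c`-product `L^{n,c}`. -/
def iterProd (c : α) (hc : ar c = 0) (L : Set (GTree α ar)) : ℕ → Set (GTree α ar)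
  | 0 => {leaf c hc}
  | n + 1 => iterProd c hc L n ∪ lprod c L (iterProd c hc L n)

/-- The `c`-closure `L^{*_c}`. -/
def closure (c : α) (hc : ar c = 0) (L : Set (GTree α ar)) : Set (GTree α ar) :=
  ⋃ n, iterProd c hc L n

/-- The symbol `a` occurs (appears) in the tree. -/
def occurs (a : α) : GTree α ar → Prop
  | node f ch => f = a ∨ ∃ i, occurs a (ch i)

end GTree

/-!
The languages `Kₙ = A^{n,c} ·_c B` satisfy `K₀ = B` and `Kₙ₊₁ = Kₙ ∪ A ·_c Kₙ` (associativity of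
the `c`-product), and `A ·_c -` commutes with unions of chains because a tree has finitely many
children; hence `A^{*_c} ·_c B = ⋃ Kₙ` is the least solution of `L = A ·_c L ∪ B`, by Kleene's
argument. If the tree `c` is not in `A`, no tree of `A` has root `c`, so every tree of `A ·_c L`
is obtained by grafting strictly smaller trees of `L`; induction on size then puts every solution
inside the least one.
-/

namespace GTree

variable {α : Type} {ar : α → ℕ} {c : α}

def size : GTree α ar → ℕ
  | node _ ch => ∑ i, size (ch i) + 1

lemma size_child_lt (f : α) (ch : Fin (ar f) → GTree α ar) (i : Fin (ar f)) :
    size (ch i) < size (node f ch) :=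
  Nat.lt_succ_of_le (Finset.single_le_sum (fun j _ => Nat.zero_le (size (ch j)))
    (Finset.mem_univ i))

lemma node_eq_leaf (hc : ar c = 0) (ch : Fin (ar c) → GTree α ar) : node c ch = leaf c hc := by
  rw [leaf]
  congr
  funext i
  exact (i.cast hc).elim0

section Products

variable {f : α} {ch : Fin (ar f) → GTree α ar} {t u : GTree α ar} {L L' : Set (GTree α ar)}

lemma cprod_node_of_eq (hf : f = c) : cprod c (node f ch) L = L := by
  rw [cprod, if_pos hf]

lemma mem_cprod_node_of_ne (hf : f ≠ c) :
    u ∈ cprod c (node f ch) L ↔ ∃ ch', u = node f ch' ∧ ∀ i, ch' i ∈ cprod c (ch i) L := by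
  rw [cprod, if_neg hf]
  rfl

lemma cprod_leaf (hc : ar c = 0) (L : Set (GTree α ar)) : cprod c (leaf c hc) L = L :=
  cprod_node_of_eq rfl

lemma cprod_mono (c : α) (t : GTree α ar) (h : L ⊆ L') : cprod c t L ⊆ cprod c t L' := by
  induction t with
  | node f ch ih =>
    by_cases hf : f = c
    · rwa [cprod_node_of_eq hf, cprod_node_of_eq hf]
    · rintro u hu
      obtain ⟨ch', rfl, hch⟩ := (mem_cprod_node_of_ne hf).1 hu
      exact (mem_cprod_node_of_ne hf).2 ⟨ch', rfl, fun i => ih i (hch i)⟩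

lemma mem_lprod {A : Set (GTree α ar)} : t ∈ lprod c A L ↔ ∃ a ∈ A, t ∈ cprod c a L := by
  simp only [lprod, Set.mem_iUnion, exists_prop]

lemma lprod_mono {A A' : Set (GTree α ar)} (hA : A ⊆ A') (hL : L ⊆ L') :
    lprod c A L ⊆ lprod c A' L' :=
  Set.biUnion_mono hA fun a _ => cprod_mono c a hL

lemma lprod_union_left (A A' L : Set (GTree α ar)) :
    lprod c (A ∪ A') L = lprod c A L ∪ lprod c A' L :=
  Set.biUnion_union A A' _

lemma cprod_lprod (t : GTree α ar) (L L' : Set (GTree α ar)) :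
    cprod c t (lprod c L L') = ⋃ s ∈ cprod c t L, cprod c s L' := by
  induction t with
  | node f ch ih =>
    by_cases hf : f = c
    · rw [cprod_node_of_eq hf, cprod_node_of_eq hf]
      rfl
    · ext u
      simp only [Set.mem_iUnion₂, exists_prop, mem_cprod_node_of_ne hf, ih]
      constructor
      · rintro ⟨ch', rfl, hch⟩
        choose s hs hs' using hch
        exact ⟨node f s, ⟨s, rfl, hs⟩, (mem_cprod_node_of_ne hf).2 ⟨ch', rfl, hs'⟩⟩
      · rintro ⟨_, ⟨s, rfl, hs⟩, hu⟩
        obtain ⟨ch', rfl, hch'⟩ := (mem_cprod_node_of_ne hf).1 hu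
        exact ⟨ch', rfl, fun i => ⟨s i, hs i, hch' i⟩⟩

lemma lprod_assoc (A L L' : Set (GTree α ar)) :
    lprod c (lprod c A L) L' = lprod c A (lprod c L L') := by
  ext t
  simp only [mem_lprod, cprod_lprod, Set.mem_iUnion₂, exists_prop]
  exact ⟨fun ⟨s, ⟨a, ha, hs⟩, ht⟩ => ⟨a, ha, s, hs, ht⟩,
    fun ⟨a, ha, s, hs, ht⟩ => ⟨s, ⟨a, ha, hs⟩, ht⟩⟩

lemma cprod_iUnion_subset (t : GTree α ar) {S : ℕ → Set (GTree α ar)} (hS : Monotone S) :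
    cprod c t (⋃ n, S n) ⊆ ⋃ n, cprod c t (S n) := by
  induction t with
  | node f ch ih =>
    by_cases hf : f = c
    · simp only [cprod_node_of_eq hf, subset_rfl]
    · rintro u hu
      obtain ⟨ch', rfl, hch⟩ := (mem_cprod_node_of_ne hf).1 hu
      choose n hn using fun i => Set.mem_iUnion.1 (ih i (hch i))
      refine Set.mem_iUnion.2 ⟨Finset.univ.sup n, (mem_cprod_node_of_ne hf).2 ⟨ch', rfl, ?_⟩⟩
      exact fun i => cprod_mono c (ch i) (hS (Finset.le_sup (Finset.mem_univ i))) (hn i)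

lemma lprod_iUnion_subset (A : Set (GTree α ar)) {S : ℕ → Set (GTree α ar)} (hS : Monotone S) :
    lprod c A (⋃ n, S n) ⊆ ⋃ n, lprod c A (S n) :=
  Set.iUnion₂_subset fun a ha => (cprod_iUnion_subset a hS).trans
    (Set.iUnion_mono fun n => Set.subset_biUnion_of_mem (u := fun a => cprod c a (S n)) ha)

end Products

section Size

variable {f : α} {ch : Fin (ar f) → GTree α ar} {t u : GTree α ar} {L : Set (GTree α ar)}

lemma mem_cprod_filter_size_le (h : u ∈ cprod c t L) :
    u ∈ cprod c t {s ∈ L | size s ≤ size u} := by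
  induction t generalizing u with
  | node f ch ih =>
    by_cases hf : f = c
    · rw [cprod_node_of_eq hf] at h ⊢
      exact ⟨h, le_rfl⟩
    · obtain ⟨ch', rfl, hch⟩ := (mem_cprod_node_of_ne hf).1 h
      refine (mem_cprod_node_of_ne hf).2 ⟨ch', rfl, fun i => ?_⟩
      refine cprod_mono c (ch i) (fun s hs => ?_) (ih i (hch i))
      exact ⟨hs.1, hs.2.trans (size_child_lt f ch' i).le⟩

lemma mem_cprod_filter_size_lt (hf : f ≠ c) (h : u ∈ cprod c (node f ch) L) :
    u ∈ cprod c (node f ch) {s ∈ L | size s < size u} := by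
  obtain ⟨ch', rfl, hch⟩ := (mem_cprod_node_of_ne hf).1 h
  refine (mem_cprod_node_of_ne hf).2 ⟨ch', rfl, fun i => ?_⟩
  refine cprod_mono c (ch i) (fun s hs => ?_) (mem_cprod_filter_size_le (hch i))
  exact ⟨hs.1, hs.2.trans_lt (size_child_lt f ch' i)⟩

end Size

section Arden

variable (hc : ar c = 0) (A B : Set (GTree α ar))

lemma lprod_iterProd_zero : lprod c (iterProd c hc A 0) B = B := by
  rw [iterProd, lprod, Set.biUnion_singleton, cprod_leaf]

lemma lprod_iterProd_succ (n : ℕ) :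
    lprod c (iterProd c hc A (n + 1)) B =
      lprod c (iterProd c hc A n) B ∪ lprod c A (lprod c (iterProd c hc A n) B) := by
  rw [iterProd, lprod_union_left, lprod_assoc]

lemma monotone_lprod_iterProd : Monotone fun n => lprod c (iterProd c hc A n) B :=
  monotone_nat_of_le_succ fun n => by
    simp only [lprod_iterProd_succ, Set.subset_union_left]

lemma lprod_closure_eq_iUnion :
    lprod c (closure c hc A) B = ⋃ n, lprod c (iterProd c hc A n) B :=
  Set.biUnion_iUnion _ _

lemma lprod_union_subset_lprod_closure :
    lprod c A (lprod c (closure c hc A) B) ∪ B ⊆ lprod c (closure c hc A) B := by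
  set K := fun n => lprod c (iterProd c hc A n) B
  rw [lprod_closure_eq_iUnion]
  refine Set.union_subset ?_
    ((lprod_iterProd_zero hc A B).symm.subset.trans (Set.subset_iUnion K 0))
  refine (lprod_iUnion_subset A (monotone_lprod_iterProd hc A B)).trans
    (Set.iUnion_subset fun n => ?_)
  exact Set.subset_union_right.trans
    ((lprod_iterProd_succ hc A B n).symm.subset.trans (Set.subset_iUnion K (n + 1)))

variable {A B}

lemma lprod_closure_subset {L : Set (GTree α ar)} (hL : lprod c A L ∪ B ⊆ L) :
    lprod c (closure c hc A) B ⊆ L := by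
  rw [lprod_closure_eq_iUnion]
  refine Set.iUnion_subset fun n => ?_
  induction n with
  | zero => rw [lprod_iterProd_zero]; exact Set.subset_union_right.trans hL
  | succ n ih =>
    rw [lprod_iterProd_succ]
    exact Set.union_subset ih ((lprod_mono subset_rfl ih).trans (Set.subset_union_left.trans hL))

variable (A B) in
lemma lprod_closure_eq_lprod_union :
    lprod c (closure c hc A) B = lprod c A (lprod c (closure c hc A) B) ∪ B := by
  have hpre := lprod_union_subset_lprod_closure hc A B
  exact (lprod_closure_subset hc
    (Set.union_subset_union_left B (lprod_mono subset_rfl hpre))).antisymm hpre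

lemma mem_of_subset_lprod_union (hcA : leaf c hc ∉ A) {L K : Set (GTree α ar)}
    (hL : L ⊆ lprod c A L ∪ B) (hK : lprod c A K ∪ B ⊆ K) (t : GTree α ar) (ht : t ∈ L) :
    t ∈ K := by
  rcases hL ht with ht | ht
  · obtain ⟨⟨f, ch⟩, ha, ht⟩ := mem_lprod.1 ht
    have hf : f ≠ c := by
      rintro rfl
      exact hcA (node_eq_leaf hc ch ▸ ha)
    refine hK (Or.inl (mem_lprod.2 ⟨_, ha, ?_⟩))
    exact cprod_mono c _ (fun s hs => mem_of_subset_lprod_union hcA hL hK s hs.1)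
      (mem_cprod_filter_size_lt hf ht)
  · exact hK (Or.inr ht)
termination_by size t
decreasing_by exact hs.2

end Arden

end GTree

/-- Arden's lemma for trees, uniqueness part: if the single-node
tree `c` does not belong to `A`, then `A^{*_c} ·_c B` is the unique tree
language `L` satisfying `L = A ·_c L ∪ B`. -/
theorem arden_unique {α : Type} {ar : α → ℕ} (c : α) (hc : ar c = 0)
    (A B : Set (GTree α ar)) (hcA : GTree.leaf c hc ∉ A) :
    (GTree.lprod c (GTree.closure c hc A) B =
        GTree.lprod c A (GTree.lprod c (GTree.closure c hc A) B) ∪ B) ∧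
      ∀ L : Set (GTree α ar), L = GTree.lprod c A L ∪ B →
        L = GTree.lprod c (GTree.closure c hc A) B := by
  have hfix := GTree.lprod_closure_eq_lprod_union hc A B
  refine ⟨hfix, fun L hL => Set.Subset.antisymm ?_ (GTree.lprod_closure_subset hc hL.symm.subset)⟩
  exact GTree.mem_of_subset_lprod_union hc hcA hL.subset hfix.symm.subset
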